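/- arXiv:2509.08423 — 4 statements merged into one kernel-verified Lean document; each statement's English description precedes it below -/
import Mathlib

section
/- The rational function (−2z¹⁵ − 23z¹³ − 97z¹¹ − 163z⁹ − 38z⁷ + 81z⁵ + z³ − z)/(2z² − 1) in the variable z is not a Laurent polynomial, i.e., it does not lie in ℤ[z^{±1}]. -/
noncomputable section

/-- The field `ℚ(z)` of rational functions in one variable `z`. -/
abbrev F1 : Type := RatFunc ℚ

def z : F1 := RatFunc.X

/-- The ring of integer Laurent polynomials `ℤ[z^{±1}]` as a subring of `ℚ(z)`. -/
def LaurentZ : Subring F1 := Subring.closure {z, z⁻¹}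

/-!
Every Laurent polynomial has the form `p / z ^ n` with `p` a polynomial. If the given quotient
`N / D` had this form, then `N * X ^ n = p * D` in `ℚ[X]`; evaluating at the root `c = √2 / 2` of
`D = 2 X ^ 2 - 1` gives `N(c) * c ^ n = 0`, whereas `N(c) = 45 / 32 * c ≠ 0`.
-/

open Polynomial

namespace RatFunc

variable (K : Type*) [Field K]

def polyDivXPow : Subring (RatFunc K) where
  carrier := {f | ∃ (p : K[X]) (n : ℕ), f * X ^ n = algebraMap K[X] (RatFunc K) p}
  one_mem' := ⟨1, 0, by simp⟩
  zero_mem' := ⟨0, 0, by simp⟩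
  mul_mem' := by
    rintro f g ⟨p, m, hp⟩ ⟨q, n, hq⟩
    exact ⟨p * q, m + n, by rw [map_mul, ← hp, ← hq]; ring⟩
  add_mem' := by
    rintro f g ⟨p, m, hp⟩ ⟨q, n, hq⟩
    refine ⟨p * Polynomial.X ^ n + q * Polynomial.X ^ m, m + n, ?_⟩
    rw [map_add, map_mul, map_mul, map_pow, map_pow, algebraMap_X, ← hp, ← hq]
    ring
  neg_mem' := by
    rintro f ⟨p, n, hp⟩
    exact ⟨-p, n, by rw [map_neg, ← hp]; ring⟩

variable {K}

lemma X_mem_polyDivXPow : X ∈ polyDivXPow K :=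
  ⟨Polynomial.X, 0, by simp [algebraMap_X]⟩

lemma X_inv_mem_polyDivXPow : X⁻¹ ∈ polyDivXPow K :=
  ⟨1, 1, by simp [inv_mul_cancel₀ (X_ne_zero (K := K))]⟩

lemma div_notMem_polyDivXPow {L : Type*} [Field L] [Algebra K L] {N D : K[X]} (hD : D ≠ 0)
    {c : L} (hc : c ≠ 0) (hDc : aeval c D = 0) (hNc : aeval c N ≠ 0) :
    algebraMap K[X] (RatFunc K) N / algebraMap K[X] (RatFunc K) D ∉ polyDivXPow K := by
  rintro ⟨p, n, hp⟩
  have hD' : algebraMap K[X] (RatFunc K) D ≠ 0 := algebraMap_ne_zero hD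
  have hpoly : N * Polynomial.X ^ n = p * D := by
    apply algebraMap_injective K
    rw [map_mul, map_mul, map_pow, algebraMap_X, ← hp]
    field_simp
  have := congrArg (aeval c) hpoly
  simp only [map_mul, map_pow, aeval_X, hDc, mul_zero] at this
  exact mul_ne_zero hNc (pow_ne_zero n hc) this

end RatFunc

lemma laurentZ_le_polyDivXPow : LaurentZ ≤ RatFunc.polyDivXPow ℚ := by
  rw [LaurentZ, Subring.closure_le]
  rintro f (rfl | rfl)
  exacts [RatFunc.X_mem_polyDivXPow, RatFunc.X_inv_mem_polyDivXPow]

theorem stmt_4 :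
    (-2 * z ^ 15 - 23 * z ^ 13 - 97 * z ^ 11 - 163 * z ^ 9 - 38 * z ^ 7 + 81 * z ^ 5
        + z ^ 3 - z) / (2 * z ^ 2 - 1) ∉ LaurentZ := by
  set N : ℚ[X] := -2 * X ^ 15 - 23 * X ^ 13 - 97 * X ^ 11 - 163 * X ^ 9 - 38 * X ^ 7
      + 81 * X ^ 5 + X ^ 3 - X
  set D : ℚ[X] := 2 * X ^ 2 - 1
  have hquot : (-2 * z ^ 15 - 23 * z ^ 13 - 97 * z ^ 11 - 163 * z ^ 9 - 38 * z ^ 7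
      + 81 * z ^ 5 + z ^ 3 - z) / (2 * z ^ 2 - 1)
      = algebraMap ℚ[X] F1 N / algebraMap ℚ[X] F1 D := by
    simp only [N, D, map_sub, map_add, map_mul, map_pow, map_neg, map_ofNat, map_one,
      RatFunc.algebraMap_X, z]
  have hD : D ≠ 0 := fun h ↦ by simpa [D] using congrArg (eval 0) h
  set c : ℝ := √2 / 2
  have hc : c ≠ 0 := by positivity
  have hc2 : c ^ 2 = 1 / 2 := by rw [div_pow, Real.sq_sqrt zero_le_two]; norm_num
  clear_value c
  have hDc : aeval c D = 0 := by
    simp only [D, map_sub, map_mul, map_pow, map_ofNat, map_one, aeval_X]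
    linear_combination 2 * hc2
  -- the multiplier of `hc2` is the quotient of `N - 45 / 32 * X` by `X ^ 2 - 1 / 2`
  have hNc : aeval c N = 45 / 32 * c := by
    simp only [N, map_sub, map_add, map_mul, map_pow, map_neg, map_ofNat, aeval_X]
    linear_combination (-2 * c ^ 13 - 24 * c ^ 11 - 109 * c ^ 9 - 435 / 2 * c ^ 7
      - 587 / 4 * c ^ 5 + 61 / 8 * c ^ 3 + 77 / 16 * c) * hc2
  rw [hquot]
  refine fun hmem ↦ RatFunc.div_notMem_polyDivXPow hD hc hDc ?_ (laurentZ_le_polyDivXPow hmem)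
  rw [hNc]
  positivity

end
end

section
/- The rational function z²·(2z¹² + 25z¹⁰ + 112z⁸ + 186z⁶ + 17z⁴ − 83z² + 9)/(2z² − 1) in the variable z is not a Laurent polynomial, i.e., it does not lie in ℤ[z^{±1}]. -/
/-
If `x ∈ ℤ[z^{±1}]`, then `x * z^n` is a polynomial for some `n`. So if `N / D` were a Laurent
polynomial, `D` would divide `N * X^n`; evaluating at a nonzero root `c` of `D` forces `N(c) = 0`.
Here `D = 2X² - 1` has the root `c = √2/2`, at which `c² = 1/2` and the numerator is `45/32`.
-/

noncomputable section

open Polynomial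

namespace RatFunc

variable {K : Type*} [Field K]

lemma exists_mul_X_pow_eq_algebraMap_of_mem_closure {x : RatFunc K}
    (hx : x ∈ Subring.closure {X, X⁻¹}) :
    ∃ (n : ℕ) (q : K[X]), x * X ^ n = algebraMap K[X] (RatFunc K) q := by
  induction hx using Subring.closure_induction with
  | mem y hy =>
    rcases hy with rfl | rfl
    · exact ⟨0, Polynomial.X, by simp⟩
    · exact ⟨1, 1, by simp [X_ne_zero]⟩
  | zero => exact ⟨0, 0, by simp⟩
  | one => exact ⟨0, 1, by simp⟩
  | add a b _ _ ha hb =>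
    obtain ⟨n, p, hp⟩ := ha
    obtain ⟨m, q, hq⟩ := hb
    refine ⟨n + m, p * Polynomial.X ^ m + q * Polynomial.X ^ n, ?_⟩
    simp only [map_add, map_mul, map_pow, algebraMap_X, ← hp, ← hq]
    ring
  | neg a _ ha =>
    obtain ⟨n, p, hp⟩ := ha
    exact ⟨n, -p, by rw [map_neg, ← hp, neg_mul]⟩
  | mul a b _ _ ha hb =>
    obtain ⟨n, p, hp⟩ := ha
    obtain ⟨m, q, hq⟩ := hb
    refine ⟨n + m, p * q, ?_⟩
    rw [map_mul, ← hp, ← hq]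
    ring

lemma algebraMap_div_notMem_closure_of_aeval {L : Type*} [CommRing L] [IsDomain L]
    [Algebra K L] {N D : K[X]} (hD : D ≠ 0) {c : L} (hc : c ≠ 0) (hDc : aeval c D = 0)
    (hNc : aeval c N ≠ 0) :
    algebraMap K[X] (RatFunc K) N / algebraMap K[X] (RatFunc K) D ∉
      Subring.closure {X, X⁻¹} := by
  intro hmem
  obtain ⟨n, q, hq⟩ := exists_mul_X_pow_eq_algebraMap_of_mem_closure hmem
  have hD' : algebraMap K[X] (RatFunc K) D ≠ 0 :=
    (map_ne_zero_iff _ (algebraMap_injective K)).mpr hD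
  rw [div_mul_eq_mul_div, div_eq_iff hD', ← algebraMap_X, ← map_pow, ← map_mul,
    ← map_mul] at hq
  have hdvd := congrArg (aeval c) (algebraMap_injective K hq)
  rw [map_mul, map_mul, hDc, mul_zero, map_pow, aeval_X] at hdvd
  exact mul_ne_zero hNc (pow_ne_zero n hc) hdvd

end RatFunc

theorem stmt_5 :
    z ^ 2 * (2 * z ^ 12 + 25 * z ^ 10 + 112 * z ^ 8 + 186 * z ^ 6 + 17 * z ^ 4
        - 83 * z ^ 2 + 9) / (2 * z ^ 2 - 1) ∉ LaurentZ := by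
  set N : ℚ[X] := X ^ 2 * (2 * X ^ 12 + 25 * X ^ 10 + 112 * X ^ 8 + 186 * X ^ 6 + 17 * X ^ 4
    - 83 * X ^ 2 + 9)
  set D : ℚ[X] := 2 * X ^ 2 - 1
  have hz : z = algebraMap ℚ[X] F1 X := RatFunc.algebraMap_X.symm
  have hfrac : z ^ 2 * (2 * z ^ 12 + 25 * z ^ 10 + 112 * z ^ 8 + 186 * z ^ 6 + 17 * z ^ 4
      - 83 * z ^ 2 + 9) / (2 * z ^ 2 - 1) = algebraMap ℚ[X] F1 N / algebraMap ℚ[X] F1 D := by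
    simp only [N, D, hz, map_mul, map_add, map_sub, map_pow, map_ofNat, map_one]
  have hD : D ≠ 0 := fun h ↦ by simpa [D] using congrArg (eval 0) h
  set c : ℝ := √2 / 2
  have hc : c ≠ 0 := by positivity
  have hc2 : c ^ 2 = 1 / 2 := by
    rw [div_pow, Real.sq_sqrt zero_le_two]
    norm_num
  have hDc : aeval c D = 0 := by
    simp only [D, map_sub, map_mul, map_pow, map_ofNat, map_one, aeval_X, hc2]
    norm_num
  have hNc : aeval c N = 45 / 32 := by
    simp only [N, map_mul, map_add, map_sub, map_pow, map_ofNat, aeval_X]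
    rw [show c ^ 12 = (c ^ 2) ^ 6 by ring, show c ^ 10 = (c ^ 2) ^ 5 by ring,
      show c ^ 8 = (c ^ 2) ^ 4 by ring, show c ^ 6 = (c ^ 2) ^ 3 by ring,
      show c ^ 4 = (c ^ 2) ^ 2 by ring, hc2]
    norm_num
  rw [hfrac]
  exact RatFunc.algebraMap_div_notMem_closure_of_aeval hD hc hDc (by norm_num [hNc])

end
end

section
/- The rational function z²·(2z⁸ + 9z⁶ − 7z⁴ − 61z² + 13)/(2z² − 1) is not an element of ℤ[z^{±1}]. -/
/-!
Clearing a power of `z`, membership in `ℤ[z^{±1}]` would give an identity `N * X ^ n = p * D`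
in `ℤ[X]`, where `N` is the numerator and `D = 2X² - 1`. Reducing modulo 7 and evaluating at
the unit `X = 2` kills `D` (as `D(2) = 7`) but not `N` (as `N(2) = 2980 ≡ 5`), a contradiction.
-/

noncomputable section

open Polynomial

theorem Subring.exists_mul_pow_mem_of_mem_closure_pair_inv {K : Type*} [Field K] (S : Subring K)
    {t x : K} (ht : t ∈ S) (hx : x ∈ closure {t, t⁻¹}) : ∃ n : ℕ, x * t ^ n ∈ S := by
  induction hx using Subring.closure_induction with
  | mem x hx =>
    rcases hx with rfl | rfl
    · exact ⟨0, by simpa using ht⟩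
    · refine ⟨1, ?_⟩
      rcases eq_or_ne t 0 with rfl | ht0
      · simp
      · simp [inv_mul_cancel₀ ht0]
  | zero => exact ⟨0, by simp⟩
  | one => exact ⟨0, by simp⟩
  | add x y _ _ hx hy =>
    obtain ⟨a, ha⟩ := hx
    obtain ⟨b, hb⟩ := hy
    refine ⟨a + b, ?_⟩
    convert S.add_mem (S.mul_mem ha (S.pow_mem ht b)) (S.mul_mem hb (S.pow_mem ht a)) using 1
    ring
  | neg x _ hx =>
    obtain ⟨a, ha⟩ := hx
    exact ⟨a, by simpa [neg_mul] using S.neg_mem ha⟩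
  | mul x y _ _ hx hy =>
    obtain ⟨a, ha⟩ := hx
    obtain ⟨b, hb⟩ := hy
    refine ⟨a + b, ?_⟩
    convert S.mul_mem ha hb using 1
    ring

def intPolyToF1 : ℤ[X] →+* F1 :=
  (algebraMap ℚ[X] F1).comp (mapRingHom (Int.castRingHom ℚ))

theorem intPolyToF1_injective : Function.Injective intPolyToF1 :=
  (IsFractionRing.injective ℚ[X] F1).comp (map_injective _ Int.cast_injective)

@[simp]
theorem intPolyToF1_X : intPolyToF1 X = z := by
  simp [intPolyToF1, z, RatFunc.algebraMap_X]

theorem exists_mul_X_pow_eq_of_div_mem_laurentZ {N D : ℤ[X]} (hD : D ≠ 0)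
    (h : intPolyToF1 N / intPolyToF1 D ∈ LaurentZ) : ∃ (n : ℕ) (p : ℤ[X]), N * X ^ n = p * D := by
  obtain ⟨n, p, hp⟩ := Subring.exists_mul_pow_mem_of_mem_closure_pair_inv intPolyToF1.range
    ⟨X, intPolyToF1_X⟩ h
  refine ⟨n, p, intPolyToF1_injective ?_⟩
  have hD' : intPolyToF1 D ≠ 0 := (map_ne_zero_iff _ intPolyToF1_injective).mpr hD
  rw [map_mul, map_mul, map_pow, intPolyToF1_X, hp]
  field_simp

theorem div_notMem_laurentZ_of_eval {k : Type*} [CommRing k] (f : ℤ[X] →+* k)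
    {N D : ℤ[X]} (hD0 : D ≠ 0) (hD : f D = 0) (hN : f N ≠ 0) (hX : IsUnit (f X)) :
    intPolyToF1 N / intPolyToF1 D ∉ LaurentZ := by
  intro h
  obtain ⟨n, p, hNp⟩ := exists_mul_X_pow_eq_of_div_mem_laurentZ hD0 h
  have hfNp := congrArg f hNp
  rw [map_mul, map_mul, map_pow, hD, mul_zero] at hfNp
  exact hN ((hX.pow n).mul_left_eq_zero.mp hfNp)

theorem stmt_7 :
    z ^ 2 * (2 * z ^ 8 + 9 * z ^ 6 - 7 * z ^ 4 - 61 * z ^ 2 + 13) / (2 * z ^ 2 - 1)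
      ∉ LaurentZ := by
  have h := div_notMem_laurentZ_of_eval (eval₂RingHom (Int.castRingHom (ZMod 7)) 2)
    (N := X ^ 2 * (2 * X ^ 8 + 9 * X ^ 6 - 7 * X ^ 4 - 61 * X ^ 2 + 13)) (D := 2 * X ^ 2 - 1)
    (fun hD => by simpa using congrArg (eval 0) hD)
    (by simpa using (by decide : ((7 : ℤ) : ZMod 7) = 0))
    (by simpa using (by decide : ((2980 : ℤ) : ZMod 7) ≠ 0))
    (IsUnit.of_mul_eq_one 4 (by simpa using (by decide : (2 : ZMod 7) * 4 = 1)))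
  simpa [map_ofNat] using h

end
end

section
/- The two pairs of Laurent polynomials (A₁, B₁) and (A₂, B₂), where A₁ = −2z¹⁵ − 11z¹³ + 51z¹¹ + 527z⁹ + 1512z⁷ + 1924z⁵ + 1041z³ + 103z − 56/z, B₁ = −2z¹⁶ − 15z¹⁴ + 33z¹² + 685z¹⁰ + 2874z⁸ + 5794z⁶ + 6123z⁴ + 3163z² + 600, A₂ = −2z¹⁵ − 3z¹³ + 155z¹¹ + 1055z⁹ + 2840z⁷ + 3652z⁵ + 2129z³ + 359z − 56/z, B₂ = −2z¹⁶ − 11z¹⁴ + 85z¹² + 949z¹⁰ + 3538z⁸ + 6658z⁶ + 6667z⁴ + 3291z² + 600, satisfy A₁ ≠ A₂ and B₁ ≠ B₂ as elements of ℤ[z^{±1}]. -/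
noncomputable section

open Polynomial

/-! The two differences share the factor `D(z) = z¹² + 13z¹⁰ + 66z⁸ + 166z⁶ + 216z⁴ + 136z² + 32`:
`A₂ - A₁ = 8z·D(z)` and `B₂ - B₁ = 4z²·D(z)`. Since `D(1) = 630`, `D` is a nonzero element of
`ℚ(z)`, and so are both differences. -/

theorem RatFunc.algebraMap_ne_zero_of_eval_ne_zero {K : Type*} [Field K] {p : K[X]} (a : K)
    (h : p.eval a ≠ 0) : algebraMap K[X] (RatFunc K) p ≠ 0 :=
  RatFunc.algebraMap_ne_zero fun hp => h (by simp [hp])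

theorem z_ne_zero : z ≠ 0 := RatFunc.X_ne_zero

theorem commonFactor_ne_zero :
    z ^ 12 + 13 * z ^ 10 + 66 * z ^ 8 + 166 * z ^ 6 + 216 * z ^ 4 + 136 * z ^ 2 + 32 ≠ 0 := by
  have h := RatFunc.algebraMap_ne_zero_of_eval_ne_zero (p :=
    X ^ 12 + 13 * X ^ 10 + 66 * X ^ 8 + 166 * X ^ 6 + 216 * X ^ 4 + 136 * X ^ 2 + 32) (1 : ℚ)
    (by norm_num)
  simpa [z, RatFunc.algebraMap_X, map_ofNat] using h

theorem stmt_9 :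
    (-2 * z ^ 15 - 11 * z ^ 13 + 51 * z ^ 11 + 527 * z ^ 9 + 1512 * z ^ 7 + 1924 * z ^ 5
        + 1041 * z ^ 3 + 103 * z - 56 / z
      ≠ -2 * z ^ 15 - 3 * z ^ 13 + 155 * z ^ 11 + 1055 * z ^ 9 + 2840 * z ^ 7 + 3652 * z ^ 5
        + 2129 * z ^ 3 + 359 * z - 56 / z) ∧
    (-2 * z ^ 16 - 15 * z ^ 14 + 33 * z ^ 12 + 685 * z ^ 10 + 2874 * z ^ 8 + 5794 * z ^ 6
        + 6123 * z ^ 4 + 3163 * z ^ 2 + 600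
      ≠ -2 * z ^ 16 - 11 * z ^ 14 + 85 * z ^ 12 + 949 * z ^ 10 + 3538 * z ^ 8 + 6658 * z ^ 6
        + 6667 * z ^ 4 + 3291 * z ^ 2 + 600) := by
  constructor
  · intro h
    refine mul_ne_zero (mul_ne_zero (by norm_num : (8 : F1) ≠ 0) z_ne_zero) commonFactor_ne_zero ?_
    linear_combination -h
  · intro h
    refine mul_ne_zero (mul_ne_zero (by norm_num : (4 : F1) ≠ 0) (pow_ne_zero 2 z_ne_zero))
      commonFactor_ne_zero ?_
    linear_combination -h

end
end
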